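/- arXiv:1805.06328 — 2 statements merged into one kernel-verified Lean document; each statement's English description precedes it below -/
import Mathlib

section
/- In a preferential attachment random caterpillar tree with m ≥ 2 spine vertices, the variance of the degree of an interior spine vertex (2 ≤ i ≤ m-1) at time n equals ((m-2)n^2 + 2(m-2)(m-1)n) / ((m-1)^2 (2m-1)), and the variance of the degree of an endpoint spine vertex (i = 1 or i = m) equals ((2m-3)n^2 + (2m-3)(2m-2)n) / (4(m-1)^2 (2m-1)). -/
open Finset Filter MeasureTheory

/-- Number of leaves attached to spine vertex `i` after the choice sequence `ω`. -/
def leafCount {m n : ℕ} (ω : Fin n → Fin m) (i : Fin m) : ℕ :=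
  (Finset.univ.filter fun k => ω k = i).card

/-- Number of times vertex `i` was chosen strictly before step `k`. -/
def countBefore {m n : ℕ} (ω : Fin n → Fin m) (i : Fin m) (k : Fin n) : ℕ :=
  (Finset.univ.filter fun j => j < k ∧ ω j = i).card

/-- Probability of a particular choice sequence `ω` in the (preferential-attachment /
Pólya-Eggenberger) urn with initial composition `τ`: at each step a vertex (color) is
chosen with probability proportional to its current count. -/
noncomputable def seqProb {m n : ℕ} (τ : Fin m → ℕ) (ω : Fin n → Fin m) : ℝ :=
  ∏ k : Fin n,
    (((τ (ω k) + countBefore ω (ω k) k : ℕ) : ℝ) / (((∑ i, τ i) + (k : ℕ) : ℕ) : ℝ))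

/-- Initial degrees on the spine: 1 at both endpoints, 2 in the interior. -/
def spineInit (m : ℕ) : Fin m → ℕ := fun i => if i.val = 0 ∨ i.val = m - 1 then 1 else 2

/-- Degree of spine vertex `i` after the choice sequence `ω`. -/
def deg {m n : ℕ} (τ : Fin m → ℕ) (ω : Fin n → Fin m) (i : Fin m) : ℕ :=
  τ i + leafCount ω i

/-- Expected degree of spine vertex `i` at time `n` in the preferential attachment RCT. -/
noncomputable def degExp (m n : ℕ) (i : Fin m) : ℝ :=
  ∑ ω : Fin n → Fin m, seqProb (spineInit m) ω * (deg (spineInit m) ω i : ℝ)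

/-- Expected squared degree of spine vertex `i` at time `n`. -/
noncomputable def degSqExp (m n : ℕ) (i : Fin m) : ℝ :=
  ∑ ω : Fin n → Fin m, seqProb (spineInit m) ω * ((deg (spineInit m) ω i : ℝ)) ^ 2

/-- Expected mixed moment `E[D_{i,n} D_{j,n}]`. -/
noncomputable def degMixed (m n : ℕ) (i j : Fin m) : ℝ :=
  ∑ ω : Fin n → Fin m,
    seqProb (spineInit m) ω * ((deg (spineInit m) ω i : ℝ) * (deg (spineInit m) ω j : ℝ))

/-!
The degrees evolve as a Pólya urn: with `T = ∑ τ + n` balls, colour `i` is drawn with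
probability `D/T` and gains a ball. Rising factorials diagonalise this step, since
`D · (D+1)^(r) + (T - D) · D^(r) = (T + r) · D^(r)`; hence `E[D_n^(r)]` is `τ_i^(r)` times
`∏_{k<n} (S+k+r)/(S+k) = (S+n)^(r) / S^(r)`. The variance follows from the cases `r = 1, 2`,
and equals `τ_i (S - τ_i) n (S + n) / (S² (S + 1))`; on the spine `S = 2m - 2` and `τ_i ∈ {1, 2}`.
-/

section PolyaUrn

variable {m : ℕ}

lemma countBefore_snoc_castSucc {n : ℕ} (ω : Fin n → Fin m) (j i : Fin m) (k : Fin n) :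
    countBefore (Fin.snoc ω j) i k.castSucc = countBefore ω i k := by
  simp only [countBefore, card_filter, Fin.sum_univ_castSucc, Fin.castSucc_lt_castSucc_iff,
    Fin.snoc_castSucc, not_lt_of_gt k.castSucc_lt_last, false_and, if_false, add_zero]

lemma countBefore_snoc_last {n : ℕ} (ω : Fin n → Fin m) (j i : Fin m) :
    countBefore (Fin.snoc ω j) i (Fin.last n) = leafCount ω i := by
  rw [countBefore, leafCount, card_filter, card_filter, Fin.sum_univ_castSucc]
  simp [Fin.castSucc_lt_last]

lemma leafCount_snoc {n : ℕ} (ω : Fin n → Fin m) (j i : Fin m) :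
    leafCount (Fin.snoc ω j) i = leafCount ω i + if j = i then 1 else 0 := by
  rw [leafCount, leafCount, card_filter, card_filter, Fin.sum_univ_castSucc]
  simp

lemma deg_snoc {n : ℕ} (τ : Fin m → ℕ) (ω : Fin n → Fin m) (j i : Fin m) :
    deg τ (Fin.snoc ω j) i = if j = i then deg τ ω i + 1 else deg τ ω i := by
  split_ifs with h <;> simp [deg, leafCount_snoc, h, Nat.add_assoc]

lemma sum_deg {n : ℕ} (τ : Fin m → ℕ) (ω : Fin n → Fin m) :
    ∑ j, deg τ ω j = ∑ j, τ j + n := by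
  simp only [deg, leafCount, card_filter, sum_add_distrib]
  rw [sum_comm]
  simp

lemma seqProb_snoc {n : ℕ} (τ : Fin m → ℕ) (ω : Fin n → Fin m) (j : Fin m) :
    seqProb τ (Fin.snoc ω j) = seqProb τ ω * deg τ ω j / ((∑ i, τ i + n : ℕ) : ℝ) := by
  simp only [seqProb, Fin.prod_univ_castSucc, Fin.snoc_castSucc, countBefore_snoc_castSucc,
    Fin.snoc_last, countBefore_snoc_last, Fin.val_last, Fin.val_castSucc, deg]
  ring

/-- `E[f (D_{i,n})]` for the urn started from `τ`. -/
noncomputable def degMoment (τ : Fin m → ℕ) (n : ℕ) (i : Fin m) (f : ℕ → ℝ) : ℝ :=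
  ∑ ω : Fin n → Fin m, seqProb τ ω * f (deg τ ω i)

lemma sum_mul_ite_eq {ι R : Type*} [Fintype ι] [DecidableEq ι] [CommRing R] (w : ι → R) (i : ι)
    (a b : R) : ∑ j, w j * (if j = i then a else b) = w i * a + (∑ j, w j - w i) * b := by
  rw [← add_sum_erase _ _ (mem_univ i), ← add_sum_erase _ _ (mem_univ i),
    sum_congr rfl fun j hj => by rw [if_neg (ne_of_mem_erase hj)], ← sum_mul, if_pos rfl]
  ring

lemma degMoment_succ (τ : Fin m → ℕ) (n : ℕ) (i : Fin m) (f : ℕ → ℝ) :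
    degMoment τ (n + 1) i f = degMoment τ n i fun d =>
      (d * f (d + 1) + ((∑ j, τ j + n : ℕ) - d) * f d) / ((∑ j, τ j + n : ℕ) : ℝ) := by
  unfold degMoment
  rw [← (Fin.snocEquiv fun _ => Fin m).sum_comp, Fintype.sum_prod_type, sum_comm]
  refine sum_congr rfl fun ω _ => ?_
  have hsum : ∑ j, (deg τ ω j : ℝ) = ((∑ j, τ j + n : ℕ) : ℝ) := by
    rw [← Nat.cast_sum, sum_deg]
  calc ∑ j, seqProb τ (Fin.snoc ω j) * f (deg τ (Fin.snoc ω j) i)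
      = seqProb τ ω / ((∑ j, τ j + n : ℕ) : ℝ) *
          ∑ j, (deg τ ω j : ℝ) * (if j = i then f (deg τ ω i + 1) else f (deg τ ω i)) := by
        rw [mul_sum]
        refine sum_congr rfl fun j _ => ?_
        rw [seqProb_snoc, deg_snoc, apply_ite f]
        ring
    _ = _ := by
        rw [sum_mul_ite_eq, hsum]
        ring

lemma degMoment_mul_const (τ : Fin m → ℕ) (n : ℕ) (i : Fin m) (f : ℕ → ℝ) (c : ℝ) :
    degMoment τ n i (fun d => f d * c) = degMoment τ n i f * c := by
  simp only [degMoment, sum_mul, mul_assoc]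

theorem degMoment_ascFactorial (τ : Fin m → ℕ) (hτ : 0 < ∑ j, τ j) (n r : ℕ) (i : Fin m) :
    degMoment τ n i (fun d => (d.ascFactorial r : ℝ)) =
      (τ i).ascFactorial r * (∑ j, τ j + n).ascFactorial r / (∑ j, τ j).ascFactorial r := by
  have hS : ((∑ j, τ j).ascFactorial r : ℝ) ≠ 0 := by
    rw [← Nat.succ_pred_eq_of_pos hτ]; exact_mod_cast (Nat.ascFactorial_pos _ r).ne'
  induction n with
  | zero => simp [degMoment, seqProb, deg, leafCount, hS]
  | succ n ih =>
    set T := ∑ j, τ j + n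
    have hT : (T : ℝ) ≠ 0 := by positivity
    have step (d : ℕ) : ((d : ℝ) * (d + 1).ascFactorial r + (T - d) * d.ascFactorial r) / T =
        d.ascFactorial r * ((T + r) / T) := by
      have key : (d * (d + 1).ascFactorial r : ℝ) = (d + r) * d.ascFactorial r := by
        exact_mod_cast Nat.succ_ascFactorial d r
      field_simp
      linear_combination key
    rw [degMoment_succ, funext step, degMoment_mul_const, ih]
    have key : (T * (T + 1).ascFactorial r : ℝ) = (T + r) * T.ascFactorial r := by
      exact_mod_cast Nat.succ_ascFactorial T r
    rw [show ∑ j, τ j + (n + 1) = T + 1 by rfl]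
    field_simp
    linear_combination -((τ i).ascFactorial r : ℝ) * key

lemma degMoment_sub (τ : Fin m → ℕ) (n : ℕ) (i : Fin m) (f g : ℕ → ℝ) :
    degMoment τ n i (fun d => f d - g d) = degMoment τ n i f - degMoment τ n i g := by
  simp only [degMoment, mul_sub, sum_sub_distrib]

theorem degMoment_sq_sub_degMoment_sq (τ : Fin m → ℕ) (hτ : 0 < ∑ j, τ j) (n : ℕ) (i : Fin m) :
    degMoment τ n i (fun d => (d : ℝ) ^ 2) - degMoment τ n i (fun d => (d : ℝ)) ^ 2 =
      τ i * ((∑ j, τ j : ℕ) - τ i) * n * ((∑ j, τ j : ℕ) + n) /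
        ((∑ j, τ j : ℕ) ^ 2 * ((∑ j, τ j : ℕ) + 1)) := by
  have hsq : (fun d : ℕ => (d : ℝ) ^ 2) =
      fun d => (d.ascFactorial 2 : ℝ) - d.ascFactorial 1 := by
    ext d; push_cast [Nat.ascFactorial_succ, Nat.ascFactorial_zero]; ring
  have hid : (fun d : ℕ => (d : ℝ)) = fun d => (d.ascFactorial 1 : ℝ) := by
    ext d; simp [Nat.ascFactorial_succ]
  have hS : ((∑ j, τ j : ℕ) : ℝ) ≠ 0 := by positivity
  rw [hsq, hid, degMoment_sub, degMoment_ascFactorial τ hτ, degMoment_ascFactorial τ hτ]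
  simp only [Nat.ascFactorial_succ, Nat.ascFactorial_zero]
  push_cast at hS ⊢
  field_simp
  ring

end PolyaUrn

lemma sum_spineInit {m : ℕ} (hm : 2 ≤ m) : ∑ j, spineInit m j = 2 * (m - 1) := by
  obtain ⟨k, rfl⟩ := Nat.exists_eq_add_of_le' hm
  have first : spineInit (k + 2) 0 = 1 := if_pos (Or.inl rfl)
  have last : spineInit (k + 2) (Fin.last k).succ = 1 := if_pos (Or.inr rfl)
  have interior (j : Fin k) : spineInit (k + 2) j.castSucc.succ = 2 :=
    if_neg (by simp only [Fin.val_succ, Fin.val_castSucc]; omega)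
  rw [Fin.sum_univ_succ, Fin.sum_univ_castSucc, sum_congr rfl fun j _ => interior j, first, last,
    sum_const, card_univ, Fintype.card_fin, smul_eq_mul]
  omega

/-- the variance of the degree of spine vertex `i` at time `n` equals
`((m-2)n² + 2(m-2)(m-1)n)/((m-1)²(2m-1))` for interior vertices and
`((2m-3)n² + (2m-3)(2m-2)n)/(4(m-1)²(2m-1))` for the two endpoint vertices. -/
theorem pa_rct_degree_variance (m : ℕ) (hm : 2 ≤ m) (n : ℕ) (i : Fin m) :
    degSqExp m n i - (degExp m n i) ^ 2 =
      if i.val = 0 ∨ i.val = m - 1 then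
        ((2 * (m : ℝ) - 3) * (n : ℝ) ^ 2 + (2 * (m : ℝ) - 3) * (2 * (m : ℝ) - 2) * n)
          / (4 * ((m : ℝ) - 1) ^ 2 * (2 * (m : ℝ) - 1))
      else
        (((m : ℝ) - 2) * (n : ℝ) ^ 2 + 2 * ((m : ℝ) - 2) * ((m : ℝ) - 1) * n)
          / (((m : ℝ) - 1) ^ 2 * (2 * (m : ℝ) - 1)) := by
  have hS := sum_spineInit hm
  have hvar := degMoment_sq_sub_degMoment_sq (spineInit m) (by omega) n i
  have hScast : ((∑ j, spineInit m j : ℕ) : ℝ) = 2 * m - 2 := by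
    rw [hS, Nat.cast_mul, Nat.cast_sub (by omega)]; push_cast; ring
  rw [hScast] at hvar
  change degMoment (spineInit m) n i (fun d => (d : ℝ) ^ 2)
    - degMoment (spineInit m) n i (fun d => (d : ℝ)) ^ 2 = _
  rw [hvar]
  have hm' : (2 : ℝ) ≤ m := by exact_mod_cast hm
  have h1 : (m : ℝ) - 1 ≠ 0 := by linarith
  have h2 : 2 * (m : ℝ) - 2 + 1 ≠ 0 := by linarith
  unfold spineInit
  split_ifs <;> push_cast <;> field_simp <;> ring
end

section
/- In a preferential attachment random caterpillar tree with m ≥ 3 spine vertices, for distinct interior vertices 2 ≤ i ≠ j ≤ m-1, the covariance Cov(D_{i,n}, D_{j,n}) = -(n^2 + 2(m-1)n) / ((m-1)^2 (2m-1)); for i an endpoint and j interior, Cov(D_{i,n}, D_{j,n}) = -(n^2 + 2(m-1)n) / (2(m-1)^2 (2m-1)); and for the two endpoints, Cov(D_{1,n}, D_{m,n}) = -(n^2 + 2(m-1)n) / (4(m-1)^2 (2m-1)). -/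
open Finset Filter MeasureTheory

/-!
Conditioning on the first draw, the expectation `E_τ^n[F]` of `F` applied to the composition of
a Pólya urn started at `τ` (total `S`) after `n` draws satisfies
`E_τ^(n+1)[F] = ∑ₐ (τₐ / S) E_(τ + eₐ)^n[F]`. If `∑ₐ τₐ F(τ + eₐ) = (S + k) F(τ)` for every `τ`,
then `E_τ^n[F] = F(τ) (S + n)^(k) / S^(k)` with rising factorials `x^(k)`. The coordinate `dᵢ`
has this property with `k = 1` and, for `i ≠ j`, the product `dᵢ dⱼ` with `k = 2`, so
`Cov(Dᵢ, Dⱼ) = -τᵢ τⱼ n (S + n) / (S² (S + 1))`. The spine starts at `τ = spineInit m`, with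
`S = 2(m - 1)` and `τᵢ ∈ {1, 2}`.
-/

section Urn

variable {m : ℕ}

def addBall (τ : Fin m → ℕ) (a : Fin m) : Fin m → ℕ :=
  τ + Pi.single a 1

lemma addBall_apply (τ : Fin m → ℕ) (a i : Fin m) :
    addBall τ a i = τ i + if i = a then 1 else 0 := by
  simp [addBall, Pi.single_apply]

lemma sum_addBall (τ : Fin m → ℕ) (a : Fin m) : ∑ x, addBall τ a x = ∑ x, τ x + 1 := by
  simp [addBall, Finset.sum_add_distrib]

lemma leafCount_cons {n : ℕ} (a : Fin m) (ω : Fin n → Fin m) (i : Fin m) :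
    leafCount (Fin.cons a ω) i = (if i = a then 1 else 0) + leafCount ω i := by
  simp only [leafCount, Finset.card_filter, Fin.sum_univ_succ, Fin.cons_zero, Fin.cons_succ,
    eq_comm]

lemma countBefore_cons_zero {n : ℕ} (a : Fin m) (ω : Fin n → Fin m) (i : Fin m) :
    countBefore (Fin.cons a ω) i 0 = 0 := by
  simp [countBefore]

lemma countBefore_cons_succ {n : ℕ} (a : Fin m) (ω : Fin n → Fin m) (i : Fin m) (k : Fin n) :
    countBefore (Fin.cons a ω) i k.succ = (if i = a then 1 else 0) + countBefore ω i k := by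
  simp only [countBefore, Finset.card_filter, Fin.sum_univ_succ, Fin.cons_zero, Fin.cons_succ,
    Fin.succ_lt_succ_iff, Fin.succ_pos, true_and, eq_comm]

lemma deg_cons {n : ℕ} (τ : Fin m → ℕ) (a : Fin m) (ω : Fin n → Fin m) :
    deg τ (Fin.cons a ω) = deg (addBall τ a) ω := by
  ext i
  rw [deg, deg, leafCount_cons, addBall_apply, add_assoc]

lemma seqProb_cons {n : ℕ} (τ : Fin m → ℕ) (a : Fin m) (ω : Fin n → Fin m) :
    seqProb τ (Fin.cons a ω) = (τ a : ℝ) / (∑ x, τ x : ℕ) * seqProb (addBall τ a) ω := by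
  rw [seqProb, seqProb, Fin.prod_univ_succ]
  congr 1
  · simp [countBefore_cons_zero]
  · refine Finset.prod_congr rfl fun k _ => ?_
    rw [Fin.cons_succ, countBefore_cons_succ, sum_addBall, addBall_apply, Fin.val_succ,
      add_assoc, add_assoc, add_comm 1]

noncomputable def urnExpect (τ : Fin m → ℕ) (n : ℕ) (F : (Fin m → ℕ) → ℝ) : ℝ :=
  ∑ ω : Fin n → Fin m, seqProb τ ω * F (deg τ ω)

lemma urnExpect_zero (τ : Fin m → ℕ) (F : (Fin m → ℕ) → ℝ) : urnExpect τ 0 F = F τ := by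
  have : deg τ (default : Fin 0 → Fin m) = τ := by ext i; simp [deg, leafCount]
  simp [urnExpect, seqProb, this]

lemma urnExpect_succ (τ : Fin m → ℕ) (n : ℕ) (F : (Fin m → ℕ) → ℝ) :
    urnExpect τ (n + 1) F = ∑ a, (τ a : ℝ) / (∑ x, τ x : ℕ) * urnExpect (addBall τ a) n F := by
  rw [urnExpect, ← Fintype.sum_equiv (Fin.consEquiv fun _ => Fin m)
    (fun p => seqProb τ (Fin.cons p.1 p.2) * F (deg τ (Fin.cons p.1 p.2))) _ fun _ => rfl,
    Fintype.sum_prod_type]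
  simp only [urnExpect, Finset.mul_sum, seqProb_cons, deg_cons, mul_assoc]

lemma mul_ascPochhammer_eval_add_one (k : ℕ) (x : ℝ) :
    x * (ascPochhammer ℝ k).eval (x + 1) = (ascPochhammer ℝ k).eval x * (x + k) := by
  rw [← ascPochhammer_succ_eval, ascPochhammer_succ_left]
  simp

theorem urnExpect_eq_of_sum_mul_addBall (k : ℕ) (F : (Fin m → ℕ) → ℝ)
    (hF : ∀ τ : Fin m → ℕ, ∑ a, (τ a : ℝ) * F (addBall τ a) = ((∑ x, τ x : ℕ) + k) * F τ)
    (n : ℕ) (τ : Fin m → ℕ) (hτ : 0 < ∑ x, τ x) :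
    urnExpect τ n F = F τ * (ascPochhammer ℝ k).eval ((∑ x, τ x : ℕ) + n : ℝ) /
      (ascPochhammer ℝ k).eval ((∑ x, τ x : ℕ) : ℝ) := by
  induction n generalizing τ with
  | zero =>
    have : (ascPochhammer ℝ k).eval ((∑ x, τ x : ℕ) : ℝ) ≠ 0 :=
      (ascPochhammer_pos k _ (by exact_mod_cast hτ)).ne'
    rw [urnExpect_zero, Nat.cast_zero, add_zero, mul_div_cancel_right₀ _ this]
  | succ n ih =>
    have hS : (0 : ℝ) < (∑ x, τ x : ℕ) := by exact_mod_cast hτ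
    set S : ℝ := ((∑ x, τ x : ℕ) : ℝ)
    have hP : 0 < (ascPochhammer ℝ k).eval S := ascPochhammer_pos k S hS
    have step (a : Fin m) : urnExpect (addBall τ a) n F =
        F (addBall τ a) * (ascPochhammer ℝ k).eval (S + 1 + n) /
          (ascPochhammer ℝ k).eval (S + 1) := by
      rw [ih _ (by rw [sum_addBall]; omega), sum_addBall, Nat.cast_succ]
    calc urnExpect τ (n + 1) F
        = (∑ a, (τ a : ℝ) * F (addBall τ a)) *
            ((ascPochhammer ℝ k).eval (S + 1 + n) / (S * (ascPochhammer ℝ k).eval (S + 1))) := by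
          simp only [urnExpect_succ, step, Finset.sum_mul]
          refine Finset.sum_congr rfl fun a _ => ?_
          field_simp
          ring
      _ = F τ * (ascPochhammer ℝ k).eval (S + (n + 1 : ℕ)) / (ascPochhammer ℝ k).eval S := by
          have : S + k ≠ 0 := by positivity
          rw [hF, mul_ascPochhammer_eval_add_one, Nat.cast_succ, ← add_assoc, add_right_comm S]
          field_simp
          ring

lemma sum_mul_addBall_apply (τ : Fin m → ℕ) (i : Fin m) :
    ∑ a, (τ a : ℝ) * addBall τ a i = ((∑ x, τ x : ℕ) + 1) * τ i := by
  simp only [addBall_apply, Nat.cast_add, Nat.cast_ite, Nat.cast_one, Nat.cast_zero, mul_add,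
    mul_ite, mul_one, mul_zero, Finset.sum_add_distrib, ← Finset.sum_mul, Finset.sum_ite_eq,
    Finset.mem_univ, if_true, Nat.cast_sum]
  ring

lemma sum_mul_addBall_apply_mul_apply (τ : Fin m → ℕ) {i j : Fin m} (hij : i ≠ j) :
    ∑ a, (τ a : ℝ) * (addBall τ a i * addBall τ a j) = ((∑ x, τ x : ℕ) + 2) * (τ i * τ j) := by
  have expand (a : Fin m) : (τ a : ℝ) * (addBall τ a i * addBall τ a j) =
      τ a * (τ i * τ j) + (if i = a then (τ a : ℝ) * τ j else 0) +
        (if j = a then (τ a : ℝ) * τ i else 0) := by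
    rcases eq_or_ne i a with rfl | hia
    · simp only [addBall_apply, ↓reduceIte, Nat.cast_add, Nat.cast_one, hij.symm, add_zero]
      ring
    rcases eq_or_ne j a with rfl | hja
    · simp only [addBall_apply, hia, ↓reduceIte, add_zero, Nat.cast_add, Nat.cast_one]
      ring
    simp [addBall_apply, hia, hja]
  simp only [expand, Finset.sum_add_distrib, ← Finset.sum_mul, Finset.sum_ite_eq,
    Finset.mem_univ, if_true, Nat.cast_sum]
  ring

theorem urnExpect_apply (τ : Fin m → ℕ) (hτ : 0 < ∑ x, τ x) (n : ℕ) (i : Fin m) :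
    urnExpect τ n (fun d => d i) = τ i * ((∑ x, τ x : ℕ) + n : ℝ) / (∑ x, τ x : ℕ) := by
  simpa using urnExpect_eq_of_sum_mul_addBall 1 _ (fun τ => by
    simpa using sum_mul_addBall_apply τ i) n τ hτ

theorem urnExpect_apply_mul_apply (τ : Fin m → ℕ) (hτ : 0 < ∑ x, τ x) (n : ℕ) {i j : Fin m}
    (hij : i ≠ j) :
    urnExpect τ n (fun d => d i * d j) =
      τ i * τ j * (((∑ x, τ x : ℕ) + n) * ((∑ x, τ x : ℕ) + n + 1) : ℝ) /
        ((∑ x, τ x : ℕ) * ((∑ x, τ x : ℕ) + 1)) := by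
  simpa [ascPochhammer_succ_eval] using urnExpect_eq_of_sum_mul_addBall 2 _ (fun τ => by
    simpa using sum_mul_addBall_apply_mul_apply τ hij) n τ hτ

theorem urnExpect_covariance (τ : Fin m → ℕ) (hτ : 0 < ∑ x, τ x) (n : ℕ) {i j : Fin m}
    (hij : i ≠ j) :
    urnExpect τ n (fun d => d i * d j) -
        urnExpect τ n (fun d => d i) * urnExpect τ n (fun d => d j) =
      -(τ i * τ j * n * ((∑ x, τ x : ℕ) + n : ℝ) /
        ((∑ x, τ x : ℕ) ^ 2 * ((∑ x, τ x : ℕ) + 1))) := by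
  have hS : (0 : ℝ) < (∑ x, τ x : ℕ) := by exact_mod_cast hτ
  rw [urnExpect_apply_mul_apply τ hτ n hij, urnExpect_apply τ hτ, urnExpect_apply τ hτ]
  field_simp
  ring

end Urn

lemma sum_spineInit_s6 (M : ℕ) : ∑ i, spineInit (M + 2) i = 2 * M + 2 := by
  have first : spineInit (M + 2) 0 = 1 := if_pos (Or.inl rfl)
  have last : spineInit (M + 2) (Fin.last (M + 1)) = 1 := if_pos (Or.inr rfl)
  have interior (k : Fin M) : spineInit (M + 2) k.castSucc.succ = 2 :=
    if_neg (by simp only [Fin.val_succ, Fin.val_castSucc]; omega)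
  rw [Fin.sum_univ_succ, Fin.sum_univ_castSucc, Fin.succ_last]
  simp only [first, last, interior, Finset.sum_const, Finset.card_univ, Fintype.card_fin,
    smul_eq_mul]
  ring

lemma degMixed_sub_degExp_mul_degExp {m : ℕ} (hm : 2 ≤ m) (n : ℕ) {i j : Fin m} (hij : i ≠ j) :
    degMixed m n i j - degExp m n i * degExp m n j =
      -((spineInit m i : ℝ) * spineInit m j * ((n : ℝ) ^ 2 + 2 * ((m : ℝ) - 1) * n) /
        (4 * ((m : ℝ) - 1) ^ 2 * (2 * (m : ℝ) - 1))) := by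
  obtain ⟨M, rfl⟩ : ∃ M, m = M + 2 := ⟨m - 2, by omega⟩
  have hτ : 0 < ∑ x, spineInit (M + 2) x := by rw [sum_spineInit_s6]; omega
  have cov := urnExpect_covariance (spineInit (M + 2)) hτ n hij
  rw [sum_spineInit_s6] at cov
  refine cov.trans ?_
  rw [show ((M + 2 : ℕ) : ℝ) - 1 = M + 1 by push_cast; ring,
    show 2 * ((M + 2 : ℕ) : ℝ) - 1 = 2 * M + 3 by push_cast; ring]
  push_cast
  field_simp
  ring

/-- covariances of degrees in a preferential attachment RCT with `m ≥ 3` spine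
vertices: `-(n²+2(m-1)n)/((m-1)²(2m-1))` for two distinct interior vertices,
`-(n²+2(m-1)n)/(2(m-1)²(2m-1))` for an endpoint and an interior vertex, and
`-(n²+2(m-1)n)/(4(m-1)²(2m-1))` for the two endpoints. -/
theorem pa_rct_degree_covariance (m : ℕ) (hm : 3 ≤ m) (n : ℕ) (i j : Fin m) (hij : i ≠ j) :
    ((i.val ≠ 0 ∧ i.val ≠ m - 1 ∧ j.val ≠ 0 ∧ j.val ≠ m - 1) →
      degMixed m n i j - degExp m n i * degExp m n j =
        -(((n : ℝ) ^ 2 + 2 * ((m : ℝ) - 1) * n)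
          / (((m : ℝ) - 1) ^ 2 * (2 * (m : ℝ) - 1)))) ∧
    (((i.val = 0 ∨ i.val = m - 1) ∧ j.val ≠ 0 ∧ j.val ≠ m - 1) →
      degMixed m n i j - degExp m n i * degExp m n j =
        -(((n : ℝ) ^ 2 + 2 * ((m : ℝ) - 1) * n)
          / (2 * ((m : ℝ) - 1) ^ 2 * (2 * (m : ℝ) - 1)))) ∧
    (((i.val = 0 ∨ i.val = m - 1) ∧ (j.val = 0 ∨ j.val = m - 1)) →
      degMixed m n i j - degExp m n i * degExp m n j =
        -(((n : ℝ) ^ 2 + 2 * ((m : ℝ) - 1) * n)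
          / (4 * ((m : ℝ) - 1) ^ 2 * (2 * (m : ℝ) - 1)))) := by
  have hm' : (3 : ℝ) ≤ m := by exact_mod_cast hm
  have hm₁ : (m : ℝ) - 1 ≠ 0 := by linarith
  have hm₂ : 2 * (m : ℝ) - 1 ≠ 0 := by linarith
  rw [degMixed_sub_degExp_mul_degExp (by omega) n hij]
  refine ⟨fun ⟨hi₀, hi₁, hj₀, hj₁⟩ => ?_, fun ⟨hi, hj₀, hj₁⟩ => ?_, fun ⟨hi, hj⟩ => ?_⟩
  · simp only [spineInit, hi₀, hi₁, hj₀, hj₁, or_self, if_false]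
    field_simp
    ring
  · simp only [spineInit, hi, hj₀, hj₁, or_self, if_true, if_false]
    field_simp
    ring
  · simp only [spineInit, hi, hj, if_true]
    field_simp
    ring
end
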